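/- Let X ⊆ ℝ^n, f continuous, ρ > 0. Then x* is a global minimizer of x ↦ f(x) + (ρ/2)‖x‖₀ over X if and only if there exists y* such that (x*, y*) is a global minimizer of (x,y) ↦ f(x) + (ρ/2)∑_i y_i(y_i - 2) over {(x,y) : x ∈ X, x ∘ y = 0}. -/

import Mathlib

/- Minimising the penalty term over `y` alone: under the complementarity constraint `x i * y i = 0`,
each `y i * (y i - 2) = (y i - 1)^2 - 1` is at least `-1` where `x i = 0` and equals `0` elsewhere, with
equality for the indicator `y` of the zero set of `x`. Hence the minimum over `y` of
`∑ i, y i * (y i - 2)` is `‖x‖₀ - n`, and the two problems differ by the constant `(ρ / 2) * n`. -/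

open Finset

noncomputable def norm0 {n : ℕ} (x : Fin n → ℝ) : ℝ :=
  ((Finset.univ.filter fun i => x i ≠ 0).card : ℝ)

noncomputable def zeroIndicator {n : ℕ} (x : Fin n → ℝ) : Fin n → ℝ :=
  fun i => if x i = 0 then 1 else 0

lemma norm0_sub_eq_neg_sum_zeroIndicator {n : ℕ} (x : Fin n → ℝ) :
    norm0 x - n = -∑ i, zeroIndicator x i := by
  have h := card_filter_add_card_filter_not (s := (univ : Finset (Fin n))) (fun i => x i ≠ 0)
  simp only [card_univ, Fintype.card_fin, not_not] at h
  unfold zeroIndicator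
  rw [sum_boole, norm0, eq_neg_iff_add_eq_zero, sub_add_eq_add_sub, sub_eq_zero]
  exact_mod_cast h

lemma mul_zeroIndicator_eq_zero {n : ℕ} (x : Fin n → ℝ) (i : Fin n) :
    x i * zeroIndicator x i = 0 := by
  by_cases hx : x i = 0 <;> simp [zeroIndicator, hx]

lemma zeroIndicator_mul_sub_two {n : ℕ} (x : Fin n → ℝ) (i : Fin n) :
    zeroIndicator x i * (zeroIndicator x i - 2) = -zeroIndicator x i := by
  by_cases hx : x i = 0 <;> norm_num [zeroIndicator, hx]

lemma neg_zeroIndicator_le_mul_sub_two {n : ℕ} {x y : Fin n → ℝ} (h : ∀ i, x i * y i = 0)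
    (i : Fin n) : -zeroIndicator x i ≤ y i * (y i - 2) := by
  by_cases hx : x i = 0
  · simp only [zeroIndicator, hx, if_true]
    nlinarith [sq_nonneg (y i - 1)]
  · simp [zeroIndicator, hx, (mul_eq_zero.mp (h i)).resolve_left hx]

lemma sum_zeroIndicator_mul_sub_two {n : ℕ} (x : Fin n → ℝ) :
    ∑ i, zeroIndicator x i * (zeroIndicator x i - 2) = norm0 x - n := by
  simp only [zeroIndicator_mul_sub_two, sum_neg_distrib, norm0_sub_eq_neg_sum_zeroIndicator]

lemma norm0_sub_le_sum_mul_sub_two {n : ℕ} {x y : Fin n → ℝ} (h : ∀ i, x i * y i = 0) :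
    norm0 x - n ≤ ∑ i, y i * (y i - 2) := by
  rw [norm0_sub_eq_neg_sum_zeroIndicator, ← sum_neg_distrib]
  exact sum_le_sum fun i _ => neg_zeroIndicator_le_mul_sub_two h i

theorem stmt10_general {n : ℕ} (X : Set (Fin n → ℝ)) (f : (Fin n → ℝ) → ℝ)
    (ρ : ℝ) (hρ : 0 < ρ) (xstar : Fin n → ℝ) :
    (xstar ∈ X ∧ ∀ x ∈ X, f xstar + (ρ / 2) * norm0 xstar ≤ f x + (ρ / 2) * norm0 x) ↔
    (∃ ystar : Fin n → ℝ,
      (xstar ∈ X ∧ (∀ i, xstar i * ystar i = 0)) ∧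
      ∀ (x y : Fin n → ℝ), x ∈ X → (∀ i, x i * y i = 0) →
        f xstar + (ρ / 2) * ∑ i, ystar i * (ystar i - 2) ≤
          f x + (ρ / 2) * ∑ i, y i * (y i - 2)) := by
  have hρ2 : 0 ≤ ρ / 2 := by positivity
  constructor
  · rintro ⟨hxstar, hmin⟩
    refine ⟨zeroIndicator xstar, ⟨hxstar, mul_zeroIndicator_eq_zero xstar⟩, fun x y hx hxy => ?_⟩
    have hy := mul_le_mul_of_nonneg_left (norm0_sub_le_sum_mul_sub_two hxy) hρ2
    rw [sum_zeroIndicator_mul_sub_two]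
    linarith [hmin x hx]
  · rintro ⟨ystar, ⟨hxstar, hxystar⟩, hmin⟩
    refine ⟨hxstar, fun x hx => ?_⟩
    have hystar := mul_le_mul_of_nonneg_left (norm0_sub_le_sum_mul_sub_two hxystar) hρ2
    have h := hmin x (zeroIndicator x) hx (mul_zeroIndicator_eq_zero x)
    rw [sum_zeroIndicator_mul_sub_two] at h
    linarith

theorem stmt10 {n : ℕ} (X : Set (Fin n → ℝ)) (f : (Fin n → ℝ) → ℝ)
    (hf : Continuous f) (ρ : ℝ) (hρ : 0 < ρ) (xstar : Fin n → ℝ) :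
    (xstar ∈ X ∧ ∀ x ∈ X, f xstar + (ρ / 2) * norm0 xstar ≤ f x + (ρ / 2) * norm0 x) ↔
    (∃ ystar : Fin n → ℝ,
      (xstar ∈ X ∧ (∀ i, xstar i * ystar i = 0)) ∧
      ∀ (x y : Fin n → ℝ), x ∈ X → (∀ i, x i * y i = 0) →
        f xstar + (ρ / 2) * ∑ i, ystar i * (ystar i - 2) ≤
          f x + (ρ / 2) * ∑ i, y i * (y i - 2)) :=
  stmt10_general X f ρ hρ xstar
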